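/- arXiv:2105.04728 — 3 statements merged into one kernel-verified Lean document; each statement's English description precedes it below -/
import Mathlib

section
/- Let d ∈ ℝ^T be a demand profile, let (Ω, μ) be a probability space, and let δ : Ω → ℝ^T be a Bochner-integrable map such that δ(ω) is a feasible discharging vector for d for μ-almost every ω. Then the averaged vector δ̄ = ∫_Ω δ(ω) dμ(ω) is a feasible discharging vector for d, and R(d, δ̄) ≥ ∫_Ω R(d, δ(ω)) dμ(ω). (Consequently, no randomized algorithm can outperform the deterministic algorithm obtained by averaging its actions.) -/
open Finset MeasureTheory

noncomputable section

/-- A discharging vector `δ` is feasible for demand profile `d` (with capacity `c`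
and per-slot limit `dmax`). -/
def Feasible {T : ℕ} (c dmax : ℝ) (d δ : Fin T → ℝ) : Prop :=
  (∑ t, δ t) ≤ c ∧ ∀ t, 0 ≤ δ t ∧ δ t ≤ min dmax (d t)

/-- Peak-demand reduction `R(d, δ)`. -/
noncomputable def Red {T : ℕ} (d δ : Fin T → ℝ) : ℝ :=
  (⨆ t, d t) - ⨆ t, (d t - δ t)

/-- Offline optimal peak-demand reduction `σ(d)`. -/
noncomputable def offOpt {T : ℕ} (c dmax : ℝ) (d : Fin T → ℝ) : ℝ :=
  sSup {r | ∃ δ : Fin T → ℝ, Feasible c dmax d δ ∧ r = Red d δ}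

/-- Prefix maximum `max_{k ∈ [t]} d_k`. -/
noncomputable def prefMax {T : ℕ} (d : Fin T → ℝ) (t : Fin T) : ℝ :=
  ⨆ k : {k : Fin T // k ≤ t}, d k.1

/-- The uncertainty set `D`: all profiles with entries in `[dlo, dhi]`. -/
def inD {T : ℕ} (dlo dhi : ℝ) (d : Fin T → ℝ) : Prop :=
  ∀ t, dlo ≤ d t ∧ d t ≤ dhi

/-- Reference profile `d^t`: observed demands up to slot `t`, lowest demand `dlo` afterwards. -/
def ref {T : ℕ} (dlo : ℝ) (d : Fin T → ℝ) (t : Fin T) : Fin T → ℝ :=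
  fun k => if k ≤ t then d k else dlo

/-- Output of `pCR-PRM(π)` at slot `t`:
`δ_t(π, d) = [d_t − max_{k∈[t]} d_k + σ(d^t)/π]⁺`. -/
noncomputable def pcr {T : ℕ} (c dmax dlo : ℝ) (π : ℝ) (d : Fin T → ℝ) (t : Fin T) : ℝ :=
  max (d t - prefMax d t + offOpt c dmax (ref dlo d t) / π) 0

/-- Inventory function `Φ(π) = sup_{d ∈ D} ∑_t δ_t(π, d)`. -/
noncomputable def Phi (T : ℕ) (c dmax dlo dhi : ℝ) (π : ℝ) : ℝ :=
  sSup {s | ∃ d : Fin T → ℝ, inD dlo dhi d ∧ s = ∑ t, pcr c dmax dlo π d t}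

section Feasibility

variable {T : ℕ} (c dmax : ℝ) (d : Fin T → ℝ)

theorem convex_setOf_feasible : Convex ℝ {δ | Feasible c dmax d δ} := by
  intro x ⟨hxc, hx⟩ y ⟨hyc, hy⟩ a b ha hb hab
  refine ⟨?_, fun t => ?_⟩
  · simp only [Pi.add_apply, Pi.smul_apply, smul_eq_mul, sum_add_distrib, ← mul_sum]
    calc a * ∑ t, x t + b * ∑ t, y t ≤ a * c + b * c := by gcongr
      _ = c := by rw [← add_mul, hab, one_mul]
  · obtain ⟨hx0, hx1⟩ := hx t
    obtain ⟨hy0, hy1⟩ := hy t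
    simp only [Pi.add_apply, Pi.smul_apply, smul_eq_mul]
    constructor <;> nlinarith

theorem isClosed_setOf_feasible : IsClosed {δ | Feasible c dmax d δ} := by
  simp only [Feasible, Set.ofPred_and, Set.ofPred_forall]
  exact (isClosed_le (by fun_prop) continuous_const).inter <| isClosed_iInter fun t =>
    (isClosed_le continuous_const (continuous_apply t)).inter
      (isClosed_le (continuous_apply t) continuous_const)

variable {c dmax d}

theorem Feasible.nonneg {δ : Fin T → ℝ} (h : Feasible c dmax d δ) : 0 ≤ δ :=
  fun t => (h.2 t).1

theorem Feasible.integral {Ω : Type*} [MeasurableSpace Ω] {μ : Measure Ω}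
    [IsProbabilityMeasure μ] {δ : Ω → Fin T → ℝ} (hint : Integrable δ μ)
    (hfeas : ∀ᵐ ω ∂μ, Feasible c dmax d (δ ω)) : Feasible c dmax d (∫ ω, δ ω ∂μ) :=
  (convex_setOf_feasible c dmax d).integral_mem (isClosed_setOf_feasible c dmax d) hfeas hint

end Feasibility

section Reduction

variable {T : ℕ} (d : Fin T → ℝ)

theorem red_le_add_apply (x : Fin T → ℝ) (t : Fin T) : Red d x ≤ (⨆ s, d s) - d t + x t := by
  have : d t - x t ≤ ⨆ s, (d s - x s) :=
    le_ciSup (f := fun s => d s - x s) (Set.finite_range _).bddAbove t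
  rw [Red]
  linarith

theorem exists_red_eq_add_apply [Nonempty (Fin T)] (x : Fin T → ℝ) :
    ∃ t, Red d x = (⨆ s, d s) - d t + x t := by
  obtain ⟨t, ht⟩ := Finite.exists_max fun s => d s - x s
  have : (⨆ s, (d s - x s)) = d t - x t :=
    le_antisymm (ciSup_le ht) (le_ciSup (f := fun s => d s - x s) (Set.finite_range _).bddAbove t)
  exact ⟨t, by rw [Red, this]; ring⟩

theorem red_nonneg {x : Fin T → ℝ} (hx : 0 ≤ x) : 0 ≤ Red d x := by
  have : (⨆ s, (d s - x s)) ≤ ⨆ s, d s :=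
    ciSup_mono (Set.finite_range _).bddAbove fun s => sub_le_self _ (hx s)
  rw [Red]
  linarith

/-- Jensen's inequality for the concave function `Red d`: integrate the affine upper bound
`red_le_add_apply` at a slot where it is tight for the mean. -/
theorem integral_red_le_red_integral {Ω : Type*} [MeasurableSpace Ω] {μ : Measure Ω}
    [IsProbabilityMeasure μ] {δ : Ω → Fin T → ℝ} (hint : Integrable δ μ)
    (hnonneg : ∀ᵐ ω ∂μ, 0 ≤ δ ω) : ∫ ω, Red d (δ ω) ∂μ ≤ Red d (∫ ω, δ ω ∂μ) := by
  rcases isEmpty_or_nonempty (Fin T) with hT | hT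
  · simp [Red]
  obtain ⟨t, ht⟩ := exists_red_eq_add_apply d (∫ ω, δ ω ∂μ)
  have hδt : Integrable (fun ω => δ ω t) μ := hint.eval t
  calc ∫ ω, Red d (δ ω) ∂μ ≤ ∫ ω, (⨆ s, d s) - d t + δ ω t ∂μ :=
        integral_mono_of_nonneg (hnonneg.mono fun ω hω => red_nonneg d hω)
          ((integrable_const _).add hδt) (ae_of_all _ fun ω => red_le_add_apply d (δ ω) t)
    _ = Red d (∫ ω, δ ω ∂μ) := by
        rw [integral_add (integrable_const _) hδt, ht, eval_integral hint.eval]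
        simp

end Reduction

theorem stmt3_general (T : ℕ) (c dmax : ℝ)
    (d : Fin T → ℝ)
    {Ω : Type*} [MeasurableSpace Ω] (μ : Measure Ω) [IsProbabilityMeasure μ]
    (δ : Ω → Fin T → ℝ) (hint : Integrable δ μ)
    (hfeas : ∀ᵐ ω ∂μ, Feasible c dmax d (δ ω)) :
    Feasible c dmax d (∫ ω, δ ω ∂μ) ∧
      (∫ ω, Red d (δ ω) ∂μ) ≤ Red d (∫ ω, δ ω ∂μ) :=
  ⟨.integral hint hfeas, integral_red_le_red_integral d hint (hfeas.mono fun _ h => h.nonneg)⟩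

/-- averaging the actions of an (almost-everywhere) feasible randomized
strategy yields a feasible discharging vector whose peak reduction is at least the
expected peak reduction of the randomized strategy. -/
theorem stmt3 (T : ℕ) (hT : 0 < T) (c dmax : ℝ) (hc : 0 < c) (hdmax : 0 < dmax)
    (d : Fin T → ℝ) (hd : ∀ t, 0 < d t)
    {Ω : Type*} [MeasurableSpace Ω] (μ : Measure Ω) [IsProbabilityMeasure μ]
    (δ : Ω → Fin T → ℝ) (hint : Integrable δ μ)
    (hfeas : ∀ᵐ ω ∂μ, Feasible c dmax d (δ ω)) :
    Feasible c dmax d (∫ ω, δ ω ∂μ) ∧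
      (∫ ω, Red d (δ ω) ∂μ) ≤ Red d (∫ ω, δ ω ∂μ) :=
  stmt3_general T c dmax d μ δ hint hfeas
end
end

section
/- For every π ≥ 1, every d ∈ D, and every t ∈ [T], the output of pCR-PRM(π) satisfies 0 ≤ δ_t(π,d) ≤ min(dmax, d_t); that is, the outputs of pCR-PRM(π) always satisfy the nonnegativity, per-slot demand, and discharging-rate constraints. -/
/-! The offline optimum `σ(d)` is nonnegative (discharging nothing is feasible) and at most
`min dmax (max d)`, since any feasible `δ` reduces the peak by at most its value at a peak slot.
Applied to `d^t`, whose peak is at most the prefix maximum `P_t ≥ d_t`, this gives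
`d_t − P_t + σ(d^t)/π ≤ d_t − P_t + σ(d^t) ≤ min dmax d_t`. -/

open Finset MeasureTheory

noncomputable section

section OfflineOptimum

variable {T : ℕ} {c dmax : ℝ} {d δ : Fin T → ℝ}

lemma feasible_zero (hc : 0 ≤ c) (hdmax : 0 ≤ dmax) (hd : 0 ≤ d) : Feasible c dmax d 0 :=
  ⟨by simpa using hc, fun k => ⟨le_rfl, le_min hdmax (hd k)⟩⟩

lemma red_zero : Red d 0 = 0 := by
  simp [Red]

lemma Feasible.red_le_min [Nonempty (Fin T)] (hδ : Feasible c dmax d δ) :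
    Red d δ ≤ min dmax (⨆ k, d k) := by
  obtain ⟨k₀, hk₀⟩ := Finite.exists_max d
  have hpeak : (⨆ k, d k) = d k₀ :=
    le_antisymm (ciSup_le hk₀) (le_ciSup (Set.finite_range d).bddAbove k₀)
  have hsub : d k₀ - δ k₀ ≤ ⨆ k, (d k - δ k) :=
    le_ciSup (Set.finite_range fun k => d k - δ k).bddAbove k₀
  calc Red d δ ≤ δ k₀ := by rw [Red, hpeak]; linarith
    _ ≤ min dmax (⨆ k, d k) := hpeak ▸ (hδ.2 k₀).2

lemma offOpt_nonneg [Nonempty (Fin T)] (hc : 0 ≤ c) (hdmax : 0 ≤ dmax) (hd : 0 ≤ d) :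
    0 ≤ offOpt c dmax d :=
  le_csSup ⟨min dmax (⨆ k, d k), by rintro _ ⟨δ, hδ, rfl⟩; exact hδ.red_le_min⟩
    ⟨0, feasible_zero hc hdmax hd, red_zero.symm⟩

lemma offOpt_le_min [Nonempty (Fin T)] (hc : 0 ≤ c) (hdmax : 0 ≤ dmax) (hd : 0 ≤ d) :
    offOpt c dmax d ≤ min dmax (⨆ k, d k) :=
  csSup_le ⟨0, 0, feasible_zero hc hdmax hd, red_zero.symm⟩
    (by rintro _ ⟨δ, hδ, rfl⟩; exact hδ.red_le_min)

end OfflineOptimum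

section ReferenceProfile

variable {T : ℕ} {dlo : ℝ} {d : Fin T → ℝ} {t : Fin T}

lemma le_prefMax {k : Fin T} (hk : k ≤ t) : d k ≤ prefMax d t :=
  le_ciSup (f := fun k : {k : Fin T // k ≤ t} => d k.1) (Set.finite_range _).bddAbove ⟨k, hk⟩

lemma ref_nonneg (hdlo : 0 ≤ dlo) (hd : ∀ k, dlo ≤ d k) : 0 ≤ ref dlo d t := by
  intro k
  unfold ref
  split_ifs
  exacts [hdlo.trans (hd k), hdlo]

lemma iSup_ref_le_prefMax (hdt : dlo ≤ d t) : (⨆ k, ref dlo d t k) ≤ prefMax d t := by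
  have : Nonempty (Fin T) := ⟨t⟩
  refine ciSup_le fun k => ?_
  unfold ref
  split_ifs with hk
  exacts [le_prefMax hk, hdt.trans (le_prefMax le_rfl)]

end ReferenceProfile

theorem stmt6_general (T : ℕ) (c dmax dlo dhi : ℝ)
    (hc : 0 < c) (hdmax : 0 < dmax) (hdlo : 0 < dlo)
    (π : ℝ) (hπ : 1 ≤ π) (d : Fin T → ℝ) (hd : inD dlo dhi d) (t : Fin T) :
    0 ≤ pcr c dmax dlo π d t ∧ pcr c dmax dlo π d t ≤ min dmax (d t) := by
  have : Nonempty (Fin T) := ⟨t⟩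
  have hdlo_le : ∀ k, dlo ≤ d k := fun k => (hd k).1
  have href : 0 ≤ ref dlo d t := ref_nonneg hdlo.le hdlo_le
  have hσ_le := offOpt_le_min (c := c) hc.le hdmax.le href
  have hσπ : offOpt c dmax (ref dlo d t) / π ≤ offOpt c dmax (ref dlo d t) :=
    div_le_self (offOpt_nonneg hc.le hdmax.le href) hπ
  have hpeak := iSup_ref_le_prefMax (hdlo_le t)
  have hdt : d t ≤ prefMax d t := le_prefMax le_rfl
  refine ⟨le_max_right _ _, max_le (le_min ?_ ?_) (le_min hdmax.le (hdlo.le.trans (hdlo_le t)))⟩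
  · linarith [min_le_left dmax (⨆ k, ref dlo d t k)]
  · linarith [min_le_right dmax (⨆ k, ref dlo d t k)]

/-- for `π ≥ 1`, `d ∈ D`, `t ∈ [T]`, we have `0 ≤ δ_t(π,d) ≤ min(dmax, d_t)`. -/
theorem stmt6 (T : ℕ) (hT : 0 < T) (c dmax dlo dhi : ℝ)
    (hc : 0 < c) (hdmax : 0 < dmax) (hdlo : 0 < dlo) (hbd : dlo ≤ dhi)
    (π : ℝ) (hπ : 1 ≤ π) (d : Fin T → ℝ) (hd : inD dlo dhi d) (t : Fin T) :
    0 ≤ pcr c dmax dlo π d t ∧ pcr c dmax dlo π d t ≤ min dmax (d t) :=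
  stmt6_general T c dmax dlo dhi hc hdmax hdlo π hπ d hd t
end
end

section
/- Suppose π* ≥ 1 satisfies Φ(π*) = c. Then π* = sup over nonempty subsets I ⊆ [T] and demand profiles d ∈ D of the ratio (∑_{i∈I} σ(d^i)) / (c + ∑_{i∈I} (max_{k∈[i]} d_k − d_i)). -/
open Finset MeasureTheory

noncomputable section

/-!
Write `x_t = d_t − max_{k ≤ t} d_k + σ(d^t)/π`, so that pCR-PRM(π) outputs `x_t⁺`. For every `d ∈ D`
and `I`, `∑_{i ∈ I} x_i ≤ ∑_t x_t⁺ ≤ Φ(π) = c`, and this rearranges to "the ratio of `(I, d)` is at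
most `π`". Conversely, for `d` with `∑_t x_t⁺` close to `c` and `I = {t | 0 < x_t}` we have
`∑_{i ∈ I} x_i = ∑_t x_t⁺`, and the same rearrangement makes the ratio of `(I, d)` close to `π`.
-/

-- `sSup` of an empty or unbounded set of reals is the junk value `0`.
lemma Real.isLUB_sSup_of_sSup_ne_zero {s : Set ℝ} (h : sSup s ≠ 0) : IsLUB s (sSup s) := by
  refine isLUB_csSup ?_ ?_
  · by_contra hs
    exact h (by rw [Set.not_nonempty_iff_eq_empty.mp hs, Real.sSup_empty])
  · by_contra hs
    exact h (Real.sSup_of_not_bddAbove hs)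

section PositivePart

variable {ι : Type*} [Fintype ι] (x : ι → ℝ)

lemma sum_le_sum_max_zero (s : Finset ι) : ∑ i ∈ s, x i ≤ ∑ i, max (x i) 0 :=
  calc ∑ i ∈ s, x i ≤ ∑ i ∈ s, max (x i) 0 := sum_le_sum fun _ _ => le_max_left _ _
    _ ≤ ∑ i, max (x i) 0 :=
      sum_le_sum_of_subset_of_nonneg (subset_univ s) fun _ _ _ => le_max_right _ _

lemma sum_filter_pos_eq_sum_max_zero : ∑ i with 0 < x i, x i = ∑ i, max (x i) 0 := by
  rw [sum_filter]
  refine sum_congr rfl fun i _ => ?_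
  split_ifs with h
  · exact (max_eq_left h.le).symm
  · exact (max_eq_right (not_lt.mp h)).symm

end PositivePart

lemma div_add_le_of_div_sub_le {A b c π : ℝ} (hπ : 0 < π) (hcb : 0 < c + b)
    (h : A / π - b ≤ c) : A / (c + b) ≤ π := by
  rw [div_le_iff₀ hcb]
  rw [div_sub' hπ.ne', div_le_iff₀ hπ] at h
  linarith

lemma lt_div_add_of_mul_div_lt_div_sub {A b c π r : ℝ} (hπ : 0 < π) (hrπ : r ≤ π)
    (hb : 0 ≤ b) (hcb : 0 < c + b) (h : c * r / π < A / π - b) : r < A / (c + b) := by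
  rw [lt_div_iff₀ hcb]
  rw [div_sub' hπ.ne', div_lt_div_iff_of_pos_right hπ] at h
  nlinarith

lemma prefMax_sub_self_nonneg {T : ℕ} (d : Fin T → ℝ) (t : Fin T) : 0 ≤ prefMax d t - d t :=
  sub_nonneg.mpr <| le_ciSup (f := fun k : {k : Fin T // k ≤ t} => d k.1)
    (Set.finite_range _).bddAbove ⟨t, le_rfl⟩

section ReductionRatio

variable {T : ℕ} (c dmax dlo π : ℝ) (d : Fin T → ℝ)

def reductionRatio (I : Finset (Fin T)) : ℝ :=
  (∑ i ∈ I, offOpt c dmax (ref dlo d i)) / (c + ∑ i ∈ I, (prefMax d i - d i))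

variable {c}

lemma add_sum_prefMax_sub_pos (hc : 0 < c) (I : Finset (Fin T)) :
    0 < c + ∑ i ∈ I, (prefMax d i - d i) :=
  add_pos_of_pos_of_nonneg hc <| sum_nonneg fun i _ => prefMax_sub_self_nonneg d i

lemma sum_sub_prefMax_add_offOpt_div (I : Finset (Fin T)) :
    ∑ i ∈ I, (d i - prefMax d i + offOpt c dmax (ref dlo d i) / π) =
      (∑ i ∈ I, offOpt c dmax (ref dlo d i)) / π - ∑ i ∈ I, (prefMax d i - d i) := by
  simp only [sum_add_distrib, sum_sub_distrib, sum_div]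
  ring

variable {π}

lemma reductionRatio_le_of_sum_pcr_le (hπ : 0 < π) (hc : 0 < c) (I : Finset (Fin T))
    (h : ∑ t, pcr c dmax dlo π d t ≤ c) : reductionRatio c dmax dlo d I ≤ π := by
  refine div_add_le_of_div_sub_le hπ (add_sum_prefMax_sub_pos d hc I) ?_
  rw [← sum_sub_prefMax_add_offOpt_div]
  exact (sum_le_sum_max_zero _ I).trans h

lemma exists_lt_reductionRatio_of_lt_sum_pcr (hπ : 0 < π) (hc : 0 < c) {r : ℝ} (hr : 0 ≤ r)
    (hrπ : r ≤ π) (h : c * r / π < ∑ t, pcr c dmax dlo π d t) :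
    ∃ I : Finset (Fin T), I.Nonempty ∧ r < reductionRatio c dmax dlo d I := by
  set I : Finset (Fin T) := {i | 0 < d i - prefMax d i + offOpt c dmax (ref dlo d i) / π}
  have hI : c * r / π < ∑ i ∈ I, (d i - prefMax d i + offOpt c dmax (ref dlo d i) / π) := by
    rw [sum_filter_pos_eq_sum_max_zero]
    exact h
  refine ⟨I, ?_, ?_⟩
  · refine nonempty_iff_ne_empty.mpr fun hempty => ?_
    rw [hempty, sum_empty] at hI
    exact hI.not_ge (by positivity)
  · rw [sum_sub_prefMax_add_offOpt_div] at hI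
    exact lt_div_add_of_mul_div_lt_div_sub hπ hrπ
      (sum_nonneg fun i _ => prefMax_sub_self_nonneg d i) (add_sum_prefMax_sub_pos d hc I) hI

end ReductionRatio

theorem stmt14_general (T : ℕ) (c dmax dlo dhi : ℝ) (hc : 0 < c)
    (π : ℝ) (hπ : 1 ≤ π) (hΦ : Phi T c dmax dlo dhi π = c) :
    π = sSup {r | ∃ I : Finset (Fin T), I.Nonempty ∧ ∃ d : Fin T → ℝ, inD dlo dhi d ∧
      r = (∑ i ∈ I, offOpt c dmax (ref dlo d i)) /
          (c + ∑ i ∈ I, (prefMax d i - d i))} := by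
  have hπ0 : 0 < π := zero_lt_one.trans_le hπ
  set S : Set ℝ := {s | ∃ d : Fin T → ℝ, inD dlo dhi d ∧ s = ∑ t, pcr c dmax dlo π d t}
  have hΦlub : IsLUB S c := by
    have hsup : sSup S = c := hΦ
    exact hsup ▸ Real.isLUB_sSup_of_sSup_ne_zero (hsup.trans_ne hc.ne')
  have happrox : ∀ r < π, ∃ I : Finset (Fin T), I.Nonempty ∧ ∃ d, inD dlo dhi d ∧
      r < reductionRatio c dmax dlo d I := by
    intro r hr
    have hcr : c * max r 0 / π < c := by
      rw [div_lt_iff₀ hπ0]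
      exact mul_lt_mul_of_pos_left (max_lt hr hπ0) hc
    obtain ⟨_, ⟨d, hd, rfl⟩, hlt, -⟩ := hΦlub.exists_between hcr
    obtain ⟨I, hI, hrI⟩ := exists_lt_reductionRatio_of_lt_sum_pcr dmax dlo d hπ0 hc
      (le_max_right r 0) (max_le hr.le hπ0.le) hlt
    exact ⟨I, hI, d, hd, (le_max_left r 0).trans_lt hrI⟩
  refine (IsLUB.csSup_eq ⟨?_, fun b hb => le_of_forall_lt fun r hr => ?_⟩ ?_).symm
  · rintro _ ⟨I, -, d, hd, rfl⟩
    exact reductionRatio_le_of_sum_pcr_le dmax dlo d hπ0 hc I (hΦlub.1 ⟨d, hd, rfl⟩)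
  · obtain ⟨I, hI, d, hd, hrI⟩ := happrox r hr
    exact hrI.trans_le (hb ⟨I, hI, d, hd, rfl⟩)
  · obtain ⟨I, hI, d, hd, -⟩ := happrox 0 hπ0
    exact ⟨_, I, hI, d, hd, rfl⟩

/-- if `Φ(π*) = c`, then
`π* = sup_{∅ ≠ I ⊆ [T], d ∈ D} (∑_{i∈I} σ(d^i)) / (c + ∑_{i∈I} (max_{k∈[i]} d_k − d_i))`. -/
theorem stmt14 (T : ℕ) (hT : 0 < T) (c dmax dlo dhi : ℝ)
    (hc : 0 < c) (hdmax : 0 < dmax) (hdlo : 0 < dlo) (hbd : dlo ≤ dhi)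
    (π : ℝ) (hπ : 1 ≤ π) (hΦ : Phi T c dmax dlo dhi π = c) :
    π = sSup {r | ∃ I : Finset (Fin T), I.Nonempty ∧ ∃ d : Fin T → ℝ, inD dlo dhi d ∧
      r = (∑ i ∈ I, offOpt c dmax (ref dlo d i)) /
          (c + ∑ i ∈ I, (prefMax d i - d i))} :=
  stmt14_general T c dmax dlo dhi hc π hπ hΦ
end
end
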